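/- arXiv:1604.03496 — 7 statements merged into one kernel-verified Lean document; each statement's English description precedes it below -/
import Mathlib

section
/- If p_n^(1/n) > p_{n+1}^(1/(n+1)) for a given n ≥ 1, then n < ln(p_n) + ln(p_n)·p_n/g_n, where g_n = p_{n+1} - p_n. -/
/-!
Taking logarithms, the hypothesis says `n log p_{n+1} < (n + 1) log p_n`, i.e.
`n log (p_{n+1} / p_n) < log p_n`. Since
`log (p_{n+1} / p_n) ≥ 1 - p_n / p_{n+1} = g_n / p_{n+1}`, this gives
`n g_n < p_{n+1} log p_n = (p_n + g_n) log p_n`; divide by `g_n`.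
-/

/-- `p n` is the `n`-th prime number (`p 1 = 2`, `p 2 = 3`, ...). -/
noncomputable def p (n : ℕ) : ℕ := Nat.nth Nat.Prime (n - 1)

/-- `g n = p (n+1) - p n` is the `n`-th prime gap. -/
noncomputable def g (n : ℕ) : ℕ := p (n + 1) - p n

open Real

theorem mul_log_lt_mul_log_of_rpow_one_div_lt {a b n : ℝ} (ha : 0 < a) (hb : 0 < b) (hn : 0 < n)
    (h : b ^ (1 / (n + 1)) < a ^ (1 / n)) : n * log b < (n + 1) * log a := by
  have hlog := log_lt_log (rpow_pos_of_pos hb _) h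
  rw [log_rpow hb, log_rpow ha, one_div_mul_eq_div, one_div_mul_eq_div,
    div_lt_div_iff₀ (by positivity) hn] at hlog
  linarith

theorem sub_div_le_log_div {a b : ℝ} (ha : 0 < a) (hb : 0 < b) : (b - a) / b ≤ log (b / a) := by
  calc (b - a) / b = 1 - (b / a)⁻¹ := by field_simp
    _ ≤ log (b / a) := one_sub_inv_le_log_of_pos (div_pos hb ha)

theorem lt_log_add_log_mul_div_sub_of_rpow_one_div_lt {a b n : ℝ} (ha : 0 < a) (hab : a < b)
    (hn : 0 < n) (h : b ^ (1 / (n + 1)) < a ^ (1 / n)) :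
    n < log a + log a * a / (b - a) := by
  have hb : 0 < b := ha.trans hab
  have hgap : 0 < b - a := sub_pos.mpr hab
  have hlog : n * log (b / a) < log a := by
    rw [log_div hb.ne' ha.ne']
    linarith [mul_log_lt_mul_log_of_rpow_one_div_lt ha hb hn h]
  have hmul : n * (b - a) < log a * b := by
    calc n * (b - a) = n * ((b - a) / b) * b := by field_simp
      _ ≤ n * log (b / a) * b := by gcongr; exact sub_div_le_log_div ha hb
      _ < log a * b := by gcongr
  calc n < log a * b / (b - a) := (lt_div_iff₀ hgap).mpr hmul
    _ = log a + log a * a / (b - a) := by field_simp; ring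

theorem p_pos (n : ℕ) : 0 < p n := (Nat.prime_nth_prime _).pos

theorem p_lt_p_succ {n : ℕ} (hn : 1 ≤ n) : p n < p (n + 1) :=
  Nat.nth_strictMono Nat.infinite_setOfPred_prime (by omega)

theorem cast_g {n : ℕ} (hn : 1 ≤ n) : (g n : ℝ) = p (n + 1) - p n := by
  rw [g, Nat.cast_sub (p_lt_p_succ hn).le]

theorem firoozbakht_imp_n_lt_gap (n : ℕ) (hn : 1 ≤ n)
    (h : (p (n + 1) : ℝ) ^ ((1 : ℝ) / (n + 1)) < (p n : ℝ) ^ ((1 : ℝ) / n)) :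
    (n : ℝ) < Real.log (p n) + Real.log (p n) * (p n : ℝ) / (g n : ℝ) := by
  rw [cast_g hn]
  exact lt_log_add_log_mul_div_sub_of_rpow_one_div_lt (by exact_mod_cast p_pos n)
    (by exact_mod_cast p_lt_p_succ hn) (by exact_mod_cast hn) h
end

section
/- For all real x ≥ 285967, (x + ln(x)^2)/(ln(x) - 1 - 1/ln(x)) < x/(ln(x) - 1 - 1/ln(x) - 1/ln(x)^2). -/
/-!
With `L = ln x` and `P(L) = L⁵ - L⁴ - L³ - L²`, clearing the positive denominators turns the
difference of the two sides into `(x - P(L)) / L²`, so it suffices that `P(ln x) < x`.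
`P` is increasing on `[2, ∞)` and `P(12.5636328) < 285967`, which settles `ln x ≤ 12.5636328`;
beyond that, `e^L = e^12 · e^(L-12)` beats `P(L)` by the degree-9 Taylor lower bound of
`e^(L-12)`. The threshold is tight: `ln 285967 ≈ 12.5636317`.
-/

open Real

/-- After shifting `L` to `2 + u`, every coefficient of the difference is nonnegative. -/
lemma quintic_le_quintic {L M : ℝ} (hL : 2 ≤ L) (hLM : L ≤ M) :
    L ^ 5 - L ^ 4 - L ^ 3 - L ^ 2 ≤ M ^ 5 - M ^ 4 - M ^ 3 - M ^ 2 := by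
  obtain ⟨u, hu, rfl⟩ : ∃ u, 0 ≤ u ∧ L = 2 + u := ⟨L - 2, by linarith, by ring⟩
  obtain ⟨v, hv, rfl⟩ : ∃ v, 0 ≤ v ∧ M = 2 + u + v := ⟨M - 2 - u, by linarith, by ring⟩
  rw [← sub_nonneg]
  ring_nf
  positivity

lemma two_le_log {x : ℝ} (hx : 8 ≤ x) : 2 ≤ log x := by
  rw [le_log_iff_exp_le (by linarith), show (2 : ℝ) = (2 : ℕ) * 1 by norm_num, exp_nat_mul]
  nlinarith [exp_one_lt_d9, exp_pos 1]

lemma exp_twelve_gt : (2.7182818283 : ℝ) ^ 12 < exp 12 := by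
  rw [show (12 : ℝ) = (12 : ℕ) * 1 by norm_num, exp_nat_mul]
  exact pow_lt_pow_left₀ exp_one_gt_d9 (by norm_num) (by norm_num)

lemma taylor_le_exp {t : ℝ} (ht : 0 ≤ t) :
    1 + t + t ^ 2 / 2 + t ^ 3 / 6 + t ^ 4 / 24 + t ^ 5 / 120 + t ^ 6 / 720 + t ^ 7 / 5040 +
      t ^ 8 / 40320 + t ^ 9 / 362880 ≤ exp t := by
  have := sum_le_exp_of_nonneg ht 10
  simp only [Finset.sum_range_succ, Finset.sum_range_zero, Nat.factorial] at this
  norm_num at this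
  linarith

lemma quintic_lt_exp {L : ℝ} (hL : 12.5636328 ≤ L) : L ^ 5 - L ^ 4 - L ^ 3 - L ^ 2 < exp L := by
  obtain ⟨t, ht, rfl⟩ : ∃ t, 0.5636328 ≤ t ∧ L = 12 + t := ⟨L - 12, by linarith, by ring⟩
  have hpoly : (12 + t) ^ 5 - (12 + t) ^ 4 - (12 + t) ^ 3 - (12 + t) ^ 2 <
      (2.7182818283 : ℝ) ^ 12 * (1 + t + t ^ 2 / 2 + t ^ 3 / 6 + t ^ 4 / 24 + t ^ 5 / 120 +
        t ^ 6 / 720 + t ^ 7 / 5040 + t ^ 8 / 40320 + t ^ 9 / 362880) := by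
    have hu : (0 : ℝ) ≤ t - 0.5636328 := by linarith
    nlinarith [pow_nonneg hu 2, pow_nonneg hu 3, pow_nonneg hu 4, pow_nonneg hu 5,
      pow_nonneg hu 6, pow_nonneg hu 7, pow_nonneg hu 8, pow_nonneg hu 9]
  calc _ < _ := hpoly
    _ ≤ exp 12 * exp t := by
      gcongr
      · exact exp_twelve_gt.le
      · exact taylor_le_exp (by linarith)
    _ = exp (12 + t) := (exp_add 12 t).symm

lemma quintic_log_lt_self {x : ℝ} (hx : 285967 ≤ x) :
    log x ^ 5 - log x ^ 4 - log x ^ 3 - log x ^ 2 < x := by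
  rcases le_or_gt (log x) 12.5636328 with hL | hL
  · calc _ ≤ (12.5636328 : ℝ) ^ 5 - 12.5636328 ^ 4 - 12.5636328 ^ 3 - 12.5636328 ^ 2 :=
          quintic_le_quintic (two_le_log (by linarith)) hL
      _ < 285967 := by norm_num
      _ ≤ x := hx
  · simpa [exp_log (by linarith : 0 < x)] using quintic_lt_exp hL.le

lemma div_lt_div_of_quintic_lt {x L : ℝ} (hL : 2 ≤ L) (hx : L ^ 5 - L ^ 4 - L ^ 3 - L ^ 2 < x) :
    (x + L ^ 2) / (L - 1 - 1 / L) < x / (L - 1 - 1 / L - 1 / L ^ 2) := by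
  have hL0 : 0 < L := by linarith
  have hinv : 1 / L ≤ 1 / 2 := one_div_le_one_div_of_le two_pos hL
  have hinv2 : 1 / L ^ 2 ≤ 1 / 4 :=
    one_div_le_one_div_of_le (by norm_num) (by nlinarith)
  rw [div_lt_div_iff₀ (by linarith) (by linarith), ← sub_pos]
  have expand : x * (L - 1 - 1 / L) - (x + L ^ 2) * (L - 1 - 1 / L - 1 / L ^ 2)
      = (x - (L ^ 5 - L ^ 4 - L ^ 3 - L ^ 2)) / L ^ 2 := by
    field_simp
    ring
  rw [expand]
  exact div_pos (by linarith) (by positivity)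

theorem rational_log_inequality (x : ℝ) (hx : 285967 ≤ x) :
    (x + Real.log x ^ 2) / (Real.log x - 1 - 1 / Real.log x) <
      x / (Real.log x - 1 - 1 / Real.log x - 1 / Real.log x ^ 2) :=
  div_lt_div_of_quintic_lt (two_le_log (by linarith)) (quintic_log_lt_self hx)
end

section
/- If g_n < ln(p_n)^2 - ln(p_n) - 1 for all n ≥ 10 and p_n < n^2 for all n ≥ 2, then g_n < √n for all n ≥ 411781. -/
open Real

lemma log_le_div_add_log_sub_one {x c : ℝ} (hx : 0 < x) (hc : 0 < c) :
    log x ≤ x / c + log c - 1 := by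
  have h := log_le_sub_one_of_pos (div_pos hx hc)
  rw [log_div hx.ne' hc.ne'] at h
  linarith

lemma log_succ_sub_log_le {x : ℝ} (hx : 0 < x) : log (x + 1) - log x ≤ 1 / x := by
  have h := log_le_div_add_log_sub_one (by linarith : 0 < x + 1) hx
  have hdiv : (x + 1) / x = 1 / x + 1 := by field_simp; ring
  linarith

lemma thirty_two_mul_log_le_self {x : ℝ} (hx : 256 ≤ x) : 32 * log x ≤ x := by
  have h := log_le_div_add_log_sub_one (by linarith : 0 < x) (by norm_num : (0 : ℝ) < 2 ^ 8)
  rw [log_pow] at h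
  linarith [log_two_lt_d9]

lemma log_642_lt : log 642 < 6.46553 := by
  have hsplit : log 642 = 9 * log 2 + log (642 / 512) := by
    rw [show (642 : ℝ) = 2 ^ 9 * (642 / 512) by norm_num, log_mul (by norm_num) (by norm_num),
      log_pow]
    norm_num
  have hroot : log (642 / 512) ≤ 32 * log 1.0071 := by
    have h := log_le_log (by norm_num) (show (642 / 512 : ℝ) ≤ 1.0071 ^ 32 by norm_num)
    rwa [log_pow, Nat.cast_ofNat] at h
  have hstep : log 1.0071 ≤ 1.0071 - 1 := log_le_sub_one_of_pos (by norm_num)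
  linarith [log_two_lt_d9]

lemma sq_sub_self_le_sq_sub_self {x y : ℝ} (hx : 1 / 2 ≤ x) (hxy : x ≤ y) :
    x ^ 2 - x ≤ y ^ 2 - y := by
  nlinarith

lemma four_log_succ_sq_sub_le {x : ℝ} (hx : 255 ≤ x) :
    (4 * log (x + 1)) ^ 2 - 4 * log (x + 1) ≤ (4 * log x) ^ 2 - 4 * log x + 1 := by
  have hx0 : 0 < x := by linarith
  have hmono : log x ≤ log (x + 1) := log_le_log hx0 (by linarith)
  have hdiff := log_succ_sub_log_le hx0
  have hsucc := thirty_two_mul_log_le_self (by linarith : 256 ≤ x + 1)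
  have hfactor : (log (x + 1) - log x) * (16 * (log (x + 1) + log x) - 4)
      ≤ (log (x + 1) - log x) * x :=
    mul_le_mul_of_nonneg_left (by linarith) (by linarith)
  have hinc : (log (x + 1) - log x) * x ≤ 1 := by
    calc (log (x + 1) - log x) * x ≤ 1 / x * x := by gcongr
      _ = 1 := by field_simp
  nlinarith

lemma four_log_sq_sub_le_self {k : ℕ} (hk : 642 ≤ k) :
    (4 * log k) ^ 2 - 4 * log k - 1 ≤ k := by
  induction k, hk using Nat.le_induction with
  | base =>
    have hpos : 0 ≤ log 642 := log_nonneg (by norm_num)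
    push_cast
    nlinarith [log_642_lt]
  | succ k hk ih =>
    have h := four_log_succ_sq_sub_le (x := k) (by norm_cast; omega)
    push_cast
    linarith

lemma two_le_p (n : ℕ) : 2 ≤ p n := (Nat.prime_nth_prime (n - 1)).two_le

lemma one_half_le_log_p (n : ℕ) : 1 / 2 ≤ log (p n) := by
  have h : log 2 ≤ log (p n) := log_le_log (by norm_num) (by exact_mod_cast two_le_p n)
  linarith [log_two_gt_d9]

theorem gap_lt_sqrt
    (h1 : ∀ n : ℕ, 10 ≤ n → (g n : ℝ) < Real.log (p n) ^ 2 - Real.log (p n) - 1)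
    (h2 : ∀ n : ℕ, 2 ≤ n → p n < n ^ 2) :
    ∀ n : ℕ, 411781 ≤ n → (g n : ℝ) < Real.sqrt n := by
  intro n hn
  set m := Nat.sqrt (n - 1)
  have hm : 641 ≤ m := Nat.le_sqrt.mpr (by omega)
  have hmn : m ^ 2 < n := (Nat.sqrt_le' (n - 1)).trans_lt (by omega)
  have hnm : n ≤ (m + 1) ^ 2 := by
    have h : n - 1 < (m + 1) ^ 2 := Nat.lt_succ_sqrt' (n - 1)
    omega
  have hp : p n ≤ (m + 1) ^ 4 :=
    calc p n ≤ n ^ 2 := (h2 n (by omega)).le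
      _ ≤ ((m + 1) ^ 2) ^ 2 := Nat.pow_le_pow_left hnm 2
      _ = (m + 1) ^ 4 := by ring
  have hlog : log (p n) ≤ 4 * log ((m + 1 : ℕ) : ℝ) :=
    calc log (p n) ≤ log (((m + 1 : ℕ) : ℝ) ^ 4) :=
          log_le_log (by exact_mod_cast (two_le_p n).trans_lt' two_pos) (by exact_mod_cast hp)
      _ = 4 * log ((m + 1 : ℕ) : ℝ) := by rw [log_pow, Nat.cast_ofNat]
  have hg : (g n : ℝ) < (m + 1 : ℕ) :=
    calc (g n : ℝ) < log (p n) ^ 2 - log (p n) - 1 := h1 n (by omega)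
      _ ≤ (4 * log ((m + 1 : ℕ) : ℝ)) ^ 2 - 4 * log ((m + 1 : ℕ) : ℝ) - 1 := by
        linarith [sq_sub_self_le_sq_sub_self (one_half_le_log_p n) hlog]
      _ ≤ (m + 1 : ℕ) := four_log_sq_sub_le_self (by omega)
  have hgm : g n ≤ m := Nat.lt_succ_iff.mp (by exact_mod_cast hg)
  calc (g n : ℝ) ≤ m := by exact_mod_cast hgm
    _ < √n := (lt_sqrt (by positivity)).2 (by exact_mod_cast hmn)
end

section
/- If g_n < ln(p_n)^2 - ln(p_n) - 1 for all n ≥ 10, then Andrica's conjecture holds: g_n < 2√(p_n) + 1 for all n ≥ 1. -/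
/-!
For `n ≥ 10` the hypothesis reduces Andrica's inequality to the real inequality
`log x ^ 2 - log x - 1 < 2 √x + 1` for `x ≥ 1`; with `u = log x` and `√x = exp (u / 2)` it
follows from the degree-four Taylor lower bound of `exp`. The nine gaps below `p 10 = 29`
are checked directly.
-/

open Real

lemma sq_sub_self_sub_two_lt_two_mul_exp_half {u : ℝ} (hu : 0 ≤ u) :
    u ^ 2 - u - 2 < 2 * exp (u / 2) := by
  have taylor : 1 + u / 2 + (u / 2) ^ 2 / 2 + (u / 2) ^ 3 / 6 + (u / 2) ^ 4 / 24
      ≤ exp (u / 2) := by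
    simpa [Finset.sum_range_succ, Nat.factorial] using sum_le_exp_of_nonneg (by positivity) 5
  -- after substituting `taylor`, the difference is `4 + 2u - 3u²/4 + u³/24 + u⁴/192`
  nlinarith [sq_nonneg (u - 5), sq_nonneg (u ^ 2 + 4 * u - 40), mul_nonneg hu (sq_nonneg (u - 5))]

lemma log_sq_sub_log_sub_one_lt_two_mul_sqrt_add_one {x : ℝ} (hx : 1 ≤ x) :
    log x ^ 2 - log x - 1 < 2 * √x + 1 := by
  have hsqrt : √x = exp (log x / 2) := by
    rw [exp_half, exp_log (by linarith)]
  have := sq_sub_self_sub_two_lt_two_mul_exp_half (log_nonneg hx)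
  linarith

lemma lt_two_mul_sqrt_add_one_of_sq_lt_four_mul {a b : ℝ} (ha : 0 ≤ a) (hab : a ^ 2 < 4 * b) :
    a < 2 * √b + 1 := by
  have : a / 2 < √b := (lt_sqrt (by positivity)).2 (by linarith)
  linarith

lemma p_eq_of_count_eq {n k : ℕ} (hk : k.Prime) (hc : Nat.count Nat.Prime k = n - 1) :
    p n = k := by
  rw [p, ← hc, Nat.nth_count hk]

lemma sq_g_lt_four_mul_p_of_lt_ten {n : ℕ} (hn : 1 ≤ n) (h10 : n < 10) :
    g n ^ 2 < 4 * p n := by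
  have hp : p 1 = 2 ∧ p 2 = 3 ∧ p 3 = 5 ∧ p 4 = 7 ∧ p 5 = 11 ∧ p 6 = 13 ∧ p 7 = 17 ∧
      p 8 = 19 ∧ p 9 = 23 ∧ p 10 = 29 := by
    refine ⟨?_, ?_, ?_, ?_, ?_, ?_, ?_, ?_, ?_, ?_⟩ <;>
      exact p_eq_of_count_eq (by norm_num) (by decide)
  obtain ⟨h1, h2, h3, h4, h5, h6, h7, h8, h9, h10'⟩ := hp
  interval_cases n <;> simp [g, *]

theorem andrica
    (h : ∀ n : ℕ, 10 ≤ n → (g n : ℝ) < Real.log (p n) ^ 2 - Real.log (p n) - 1) :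
    ∀ n : ℕ, 1 ≤ n → (g n : ℝ) < 2 * Real.sqrt (p n) + 1 := by
  intro n hn
  rcases lt_or_ge n 10 with small | large
  · exact lt_two_mul_sqrt_add_one_of_sq_lt_four_mul (Nat.cast_nonneg _)
      (by exact_mod_cast sq_g_lt_four_mul_p_of_lt_ten hn small)
  · have hp : (1 : ℝ) ≤ p n := by exact_mod_cast (Nat.prime_nth_prime (n - 1)).one_lt.le
    exact (h n large).trans (log_sq_sub_log_sub_one_lt_two_mul_sqrt_add_one hp)
end

section
/- If g_m < ln(p_m)^2 for all m ≥ 10, then for all integers n ≥ 75, π(n^2 - n) < π(n^2). -/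
/-- Key analytic estimate: `2 log x ≤ √(x+1)` for `x ≥ 75`. -/
lemma log_bound {x : ℝ} (hx : 75 ≤ x) : 2 * Real.log x ≤ Real.sqrt (x + 1) := by
  set s := Real.sqrt (x + 1) with hs
  have hx0 : (0:ℝ) < x := by linarith
  have hs2 : s ^ 2 = x + 1 := Real.sq_sqrt (by linarith)
  have hs0 : (0:ℝ) ≤ s := Real.sqrt_nonneg _
  have hs871 : (8.71:ℝ) ≤ s := by nlinarith
  have h1 : Real.log x ≤ 2 * Real.log s := by
    have hxs : x ≤ s ^ 2 := by linarith
    calc Real.log x ≤ Real.log (s ^ 2) := Real.log_le_log hx0 hxs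
    _ = 2 * Real.log s := by rw [Real.log_pow]; push_cast; ring
  have h2 : Real.log s ≤ Real.log 8 + (s / 8 - 1) := by
    have h3 : Real.log (s / 8) ≤ s / 8 - 1 := Real.log_le_sub_one_of_pos (by linarith)
    have heq : Real.log (s/8) = Real.log s - Real.log 8 := Real.log_div (by linarith) (by norm_num)
    linarith
  have h8 : Real.log 8 = 3 * Real.log 2 := by
    rw [show (8:ℝ) = 2^3 by norm_num, Real.log_pow]; push_cast; ring
  have hl2 : Real.log 2 < 0.6931471808 := Real.log_two_lt_d9
  linarith

theorem oppermann_left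
    (h : ∀ m : ℕ, 10 ≤ m → (g m : ℝ) < Real.log (p m) ^ 2) :
    ∀ n : ℕ, 75 ≤ n → Nat.primeCounting (n ^ 2 - n) < Nat.primeCounting (n ^ 2) := by
  intro n hn
  have hinf : (setOf Nat.Prime).Infinite := Nat.infinite_setOf_prime
  set N := n ^ 2 - n with hNdef
  have hnn : n ^ 2 = n * n := sq n
  have hmul : 75 * n ≤ n * n := Nat.mul_le_mul_right n hn
  have hn2 : n ^ 2 = N + n := by omega
  have hN : 5550 ≤ N := by omega
  set k := Nat.count Nat.Prime (N + 1) with hkdef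
  have hk10 : 10 ≤ k := by
    have h30 : Nat.count Nat.Prime 30 = 10 := by decide
    have := Nat.count_monotone Nat.Prime (show 30 ≤ N + 1 by omega)
    omega
  -- the k-th prime is ≤ N
  have hpk_le : p k ≤ N := by
    have : k - 1 < Nat.count Nat.Prime (N + 1) := by omega
    have := (Nat.lt_nth_iff_count_lt hinf).mp this
    simpa [p] using Nat.lt_succ_iff.mp this
  -- the (k+1)-th prime is > N
  have hpk1_gt : N < p (k + 1) := by
    have : ¬ (k < Nat.count Nat.Prime (N + 1)) := by omega
    rw [Nat.lt_nth_iff_count_lt hinf] at this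
    simp only [p, Nat.add_sub_cancel]
    omega
  have hpk_prime : Nat.Prime (p k) := Nat.nth_mem_of_infinite hinf _
  have hpk_pos : 2 ≤ p k := hpk_prime.two_le
  have hmono : p k ≤ p (k + 1) := Nat.nth_monotone hinf (by omega : k - 1 ≤ k + 1 - 1)
  -- gap bound
  have hgap : (g k : ℝ) < Real.log (p k) ^ 2 := h k hk10
  have hlogN : Real.log (p k) ≤ Real.log (n ^ 2 : ℕ) := by
    apply Real.log_le_log (by exact_mod_cast hpk_pos.trans_lt' (by norm_num))
    exact_mod_cast le_trans hpk_le (by omega)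
  have hlog2n : Real.log ((n ^ 2 : ℕ) : ℝ) = 2 * Real.log n := by
    push_cast
    rw [Real.log_pow]; push_cast; ring
  have hlogpos : 0 ≤ Real.log (p k) := Real.log_nonneg (by exact_mod_cast hpk_pos.trans' (by norm_num))
  have hsq : Real.log (p k) ^ 2 ≤ (n : ℝ) + 1 := by
    have hb : 2 * Real.log n ≤ Real.sqrt ((n : ℝ) + 1) := log_bound (by exact_mod_cast hn)
    have h2 : Real.log (p k) ≤ Real.sqrt ((n:ℝ) + 1) := by
      rw [hlog2n] at hlogN; linarith
    have := Real.sq_sqrt (show (0:ℝ) ≤ (n:ℝ) + 1 by positivity)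
    nlinarith [Real.sqrt_nonneg ((n:ℝ) + 1)]
  have hgn : g k ≤ n := by
    have : (g k : ℝ) < (n : ℝ) + 1 := lt_of_lt_of_le hgap hsq
    exact_mod_cast Nat.lt_succ_iff.mp (by exact_mod_cast this)
  have hadd : p (k + 1) = p k + g k := by
    have : g k = p (k+1) - p k := rfl
    omega
  have hpk1_le : p (k + 1) ≤ n ^ 2 := by omega
  -- conclude
  have hcount1 : Nat.count Nat.Prime (p (k+1) + 1) = k + 1 := by
    have := Nat.count_nth_succ_of_infinite hinf k
    simpa [p] using this
  have hfinal : k + 1 ≤ Nat.count Nat.Prime (n ^ 2 + 1) := by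
    rw [← hcount1]
    exact Nat.count_monotone Nat.Prime (by omega)
  show Nat.count Nat.Prime (N + 1) < Nat.count Nat.Prime (n ^ 2 + 1)
  omega
end

section
/- If for every integer n ≥ 2 there are at least two primes strictly between n^2 and (n+1)^2, then for every n ≥ 2 there are at least four primes strictly between p_n^2 and p_{n+1}^2. -/
theorem brocard
    (h : ∀ n : ℕ, 2 ≤ n → 2 ≤ {q : ℕ | q.Prime ∧ n ^ 2 < q ∧ q < (n + 1) ^ 2}.ncard) :
    ∀ n : ℕ, 2 ≤ n → 4 ≤ {q : ℕ | q.Prime ∧ (p n) ^ 2 < q ∧ q < (p (n + 1)) ^ 2}.ncard := by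
  intro n hn
  set m := p n with hm
  have hmprime : m.Prime := Nat.prime_nth_prime _
  have hm3 : 3 ≤ m := by
    have := Nat.add_two_le_nth_prime (n - 1)
    rw [hm]; unfold p; omega
  -- p (n+1) ≥ m + 2
  have hlt : m < p (n + 1) := by
    unfold m
    unfold p
    rw [Nat.nth_lt_nth Nat.infinite_setOf_prime]
    omega
  have hprime' : (p (n + 1)).Prime := Nat.prime_nth_prime _
  have hgap : m + 2 ≤ p (n + 1) := by
    rcases Nat.lt_or_ge (p (n + 1)) (m + 2) with h' | h'
    · exfalso
      have heq : p (n + 1) = m + 1 := by omega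
      have hmodd : Odd m := hmprime.odd_of_ne_two (by omega)
      have : Even (p (n + 1)) := by rw [heq]; exact Odd.add_one hmodd
      have := (Nat.Prime.even_iff hprime').mp this
      omega
    · exact h'
  -- two subintervals
  set S1 : Set ℕ := {q : ℕ | q.Prime ∧ m ^ 2 < q ∧ q < (m + 1) ^ 2} with hS1
  set S2 : Set ℕ := {q : ℕ | q.Prime ∧ (m + 1) ^ 2 < q ∧ q < (m + 2) ^ 2} with hS2
  set S : Set ℕ := {q : ℕ | q.Prime ∧ m ^ 2 < q ∧ q < (p (n + 1)) ^ 2} with hS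
  have hSfin : S.Finite := Set.Finite.subset (Set.finite_Iio ((p (n + 1)) ^ 2))
    (fun q hq => hq.2.2)
  have h1 : 2 ≤ S1.ncard := h m (by omega)
  have h2 : 2 ≤ S2.ncard := h (m + 1) (by omega)
  have hsub1 : S1 ⊆ S := by
    intro q hq
    refine ⟨hq.1, hq.2.1, lt_of_lt_of_le hq.2.2 ?_⟩
    exact Nat.pow_le_pow_left (by omega) 2
  have hsub2 : S2 ⊆ S := by
    intro q hq
    refine ⟨hq.1, lt_trans (by nlinarith) hq.2.1, lt_of_lt_of_le hq.2.2 ?_⟩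
    exact Nat.pow_le_pow_left hgap 2
  have hdisj : Disjoint S1 S2 := by
    rw [Set.disjoint_left]
    intro q hq1 hq2
    exact absurd hq1.2.2 (not_lt.mpr (le_of_lt hq2.2.1))
  have hunion : S1 ∪ S2 ⊆ S := Set.union_subset hsub1 hsub2
  have hfin1 : S1.Finite := hSfin.subset hsub1
  have hfin2 : S2.Finite := hSfin.subset hsub2
  calc 4 ≤ S1.ncard + S2.ncard := by omega
    _ = (S1 ∪ S2).ncard := (Set.ncard_union_eq hdisj hfin1 hfin2).symm
    _ ≤ S.ncard := Set.ncard_le_ncard hunion hSfin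
end

section
/- Assume there is a constant z ≥ 2 such that p_{n+1} - p_n = z for infinitely many n (a form of Zhang's theorem). Then there exist infinitely many n with p_n^(n+1) > p_{n+1}^n, i.e., Firoozbakht's inequality p_n^(1/n) > p_{n+1}^(1/(n+1)) holds for infinitely many n. -/
open Real

lemma add_le_mul_exp_div {x z : ℝ} (hx : 0 < x) : x + z ≤ x * exp (z / x) :=
  calc x + z = x * (z / x + 1) := by field_simp; ring
    _ ≤ x * exp (z / x) := mul_le_mul_of_nonneg_left (add_one_le_exp _) hx.le

lemma add_pow_lt_pow_succ_of_exp_lt {x z : ℝ} {n : ℕ} (hz : 0 ≤ z) (hn : (n : ℝ) ≤ x)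
    (hx : exp z < x) : (x + z) ^ n < x ^ (n + 1) := by
  have hx₀ : 0 < x := (exp_pos z).trans hx
  have hexponent : n * (z / x) ≤ z := by
    rw [mul_div_assoc', div_le_iff₀ hx₀]
    exact mul_le_mul_of_nonneg_right hn hz |>.trans_eq (mul_comm _ _)
  calc (x + z) ^ n ≤ (x * exp (z / x)) ^ n :=
        pow_le_pow_left₀ (by positivity) (add_le_mul_exp_div hx₀) n
    _ = x ^ n * exp (n * (z / x)) := by rw [mul_pow, ← exp_nat_mul]
    _ ≤ x ^ n * exp z := by gcongr
    _ < x ^ n * x := by gcongr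
    _ = x ^ (n + 1) := (pow_succ x n).symm

lemma Nat.add_pow_lt_pow_succ_of_exp_lt {a z n : ℕ} (hn : n ≤ a) (ha : exp z < a) :
    (a + z) ^ n < a ^ (n + 1) :=
  mod_cast _root_.add_pow_lt_pow_succ_of_exp_lt z.cast_nonneg (by exact_mod_cast hn) ha

lemma self_lt_p (n : ℕ) : n < p n := by
  have := Nat.add_two_le_nth_prime (n - 1)
  unfold p
  omega

theorem zhang_imp_firoozbakht_infinitely_often
    (h : ∃ z : ℕ, 2 ≤ z ∧ {n : ℕ | p (n + 1) - p n = z}.Infinite) :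
    {n : ℕ | (p (n + 1)) ^ n < (p n) ^ (n + 1)}.Infinite := by
  obtain ⟨z, hz, hgaps⟩ := h
  refine (hgaps.sdiff (Set.finite_Iio ⌈exp z⌉₊)).mono ?_
  rintro n ⟨hgap, hn⟩
  -- `0 < z` rules out the truncated-subtraction case `p (n + 1) ≤ p n`.
  have hnext : p (n + 1) = p n + z := by simp only [Set.mem_ofPred_eq] at hgap; omega
  have hexp : exp z < p n := by
    simp only [Set.mem_Iio, not_lt, Nat.ceil_le] at hn
    exact hn.trans_lt (by exact_mod_cast self_lt_p n)
  show p (n + 1) ^ n < p n ^ (n + 1)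
  rw [hnext]
  exact Nat.add_pow_lt_pow_succ_of_exp_lt (self_lt_p n).le hexp
end
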